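/- Under the hypotheses of the decomposition theorem for signed hypergraphs with a $\beta$-leaf $v$ (signed edges $s_1 \subseteq \cdots \subseteq s_k$ containing $v$, with $s_i - v \in S$ whenever $|s_i - v| \ge 2$, $H_1$ the pointed part and $H_2 = H - v$), the pseudo-Boolean polytope $\mathrm{PBP}(H)$ is decomposable into $\mathrm{PBP}(H_1)$ and $\mathrm{PBP}(H_2)$: whenever $(z^1, z^\cap) \in \mathrm{PBP}(H_1)$ and $(z^\cap, z^2) \in \mathrm{PBP}(H_2)$, the combined vector $(z^1, z^\cap, z^2)$ lies in $\mathrm{PBP}(H)$. -/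

import Mathlib

/-!
Write points of `PBP(H₁)` and `PBP(H₂)` as laws `μ`, `ν` of random assignments `x : V → Bool`.
Besides single nodes, the two hypergraphs share only the monomials of the chain
`s₁ - v ⊆ ⋯ ⊆ s_k - v`, and these are laminar: a conjunction of them is either one of them or
identically false. By inclusion–exclusion, agreement on the shared coordinates therefore gives the
same law under `μ` and `ν` to the pattern `T x = {i | x satisfies sᵢ - v}`. Couple `μ` and `ν`
conditionally independently given `T` and glue the two samples, taking `v` from the `μ`-sample and
every other node from the `ν`-sample. Off `v` the glued assignment has law `ν`; the monomial of
`sᵢ` is the literal of `v` times a function of `T`, so on the coordinates of `H₁` it has law `μ`.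
-/

open Finset

/-- A signed edge on node set `V`: an underlying edge together with a sign function
(`true` = +1, `false` = -1; only values on `edge` are relevant). -/
structure SignedEdge (V : Type*) where
  edge : Finset V
  sign : V → Bool

instance {V : Type*} [DecidableEq V] [Fintype V] : DecidableEq (SignedEdge V) :=
  fun a b =>
    decidable_of_iff (a.edge = b.edge ∧ a.sign = b.sign) (by
      constructor
      · rintro ⟨h1, h2⟩; cases a; cases b; simp_all
      · rintro rfl; exact ⟨rfl, rfl⟩)

/-- Removal of a node from a signed edge (`s - v`). -/
def SignedEdge.eraseNode {V : Type*} [DecidableEq V] (t : SignedEdge V) (v : V) :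
    SignedEdge V :=
  ⟨t.edge.erase v, t.sign⟩

/-- The pseudo-Boolean set of the signed hypergraph with node set `W` and signed edge set `S`
(edges contained in `W`), as a subset of `ℝ^W × ℝ^S`. -/
def PBS {V : Type*} [DecidableEq V] (W : Finset V) (S : Finset (SignedEdge V)) :
    Set ((↥W → ℝ) × (↥S → ℝ)) :=
  {p | (∀ v, p.1 v = 0 ∨ p.1 v = 1) ∧
    ∀ s : ↥S, p.2 s =
      ∏ v ∈ W.attach.filter (fun v => ↑v ∈ (↑s : SignedEdge V).edge),
        (if (↑s : SignedEdge V).sign ↑v then p.1 v else 1 - p.1 v)}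

variable {V : Type*} [Fintype V] [DecidableEq V]

/-- The signed edges `S_v = {s₁, …, s_k}` containing the β-leaf `v`. -/
def edgesAt (k : ℕ) (s : Fin (k + 1) → SignedEdge V) : Finset (SignedEdge V) :=
  Finset.image s Finset.univ

/-- The signed edges `P_v = {sᵢ - v : |sᵢ - v| ≥ 2}`. -/
def erasedAt (k : ℕ) (s : Fin (k + 1) → SignedEdge V) (v : V) : Finset (SignedEdge V) :=
  (Finset.univ.image fun i => (s i).eraseNode v).filter fun t => 2 ≤ t.edge.card

/-- The signed edges of `H - v`. -/
def removedEdges (S : Finset (SignedEdge V)) (v : V) : Finset (SignedEdge V) :=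
  (S.image fun t => t.eraseNode v).filter fun t => 1 ≤ t.edge.card

namespace SignedEdge

variable {V : Type*} (t : SignedEdge V)

/-- The monomial of `t` equals `1` at the assignment `x`. -/
def Sat (x : V → Bool) : Prop := ∀ u ∈ t.edge, x u = t.sign u

instance : DecidablePred t.Sat := fun _ => inferInstanceAs (Decidable (∀ _ ∈ _, _))

variable {t} [DecidableEq V] {v : V} {x : V → Bool}

theorem sat_iff_of_mem (hv : v ∈ t.edge) :
    t.Sat x ↔ x v = t.sign v ∧ (t.eraseNode v).Sat x := by
  rw [Sat, ← insert_erase hv, forall_mem_insert]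
  rfl

theorem sat_update_of_notMem (hv : v ∉ t.edge) (b : Bool) :
    t.Sat (Function.update x v b) ↔ t.Sat x :=
  forall₂_congr fun u hu => by rw [Function.update_of_ne (ne_of_mem_of_not_mem hu hv)]

theorem sat_eraseNode_update (b : Bool) :
    (t.eraseNode v).Sat (Function.update x v b) ↔ (t.eraseNode v).Sat x :=
  sat_update_of_notMem (notMem_erase v t.edge) b

end SignedEdge

theorem sat_chain_forall_or {V ι : Type*} [LinearOrder ι] {t : ι → SignedEdge V}
    (ht : Monotone fun i => (t i).edge) (B : Finset ι) (hB : B.Nonempty) :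
    (∀ x, (∀ i ∈ B, (t i).Sat x) ↔ (t (B.max' hB)).Sat x) ∨ ∀ x, ¬ ∀ i ∈ B, (t i).Sat x := by
  set j := B.max' hB
  have hsub : ∀ i ∈ B, (t i).edge ⊆ (t j).edge := fun i hi => ht (B.le_max' i hi)
  by_cases hcompat : ∀ i ∈ B, ∀ u ∈ (t i).edge, (t i).sign u = (t j).sign u
  · refine Or.inl fun x => ⟨fun h => h j (B.max'_mem hB), fun h i hi u hu => ?_⟩
    rw [h u (hsub i hi hu), hcompat i hi u hu]
  · push Not at hcompat
    obtain ⟨i, hi, u, hu, hne⟩ := hcompat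
    exact Or.inr fun x h =>
      hne ((h i hi u hu).symm.trans (h j (B.max'_mem hB) u (hsub i hi hu)))

section Mass

variable {α ι : Type*} [Fintype α] {μ ν : α → ℝ}

theorem sum_filter_eq_of_sum_filter_true_eq (htot : ∑ x, μ x = ∑ x, ν x) (q : α → Bool)
    (h : ∑ x with q x = true, μ x = ∑ x with q x = true, ν x) (b : Bool) :
    ∑ x with q x = b, μ x = ∑ x with q x = b, ν x := by
  cases b
  · simp only [Bool.eq_false_iff, ne_eq]
    rw [← sum_filter_add_sum_filter_not univ (fun x => q x = true) μ,
      ← sum_filter_add_sum_filter_not univ (fun x => q x = true) ν, h] at htot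
    exact add_left_cancel htot
  · exact h

/-- Each atom of finitely many events is an alternating sum of their intersections. -/
theorem sum_filter_forall_iff_eq [DecidableEq ι] (P : ι → α → Prop) [∀ i, DecidablePred (P i)]
    (h : ∀ B : Finset ι, ∑ x with ∀ i ∈ B, P i x, μ x = ∑ x with ∀ i ∈ B, P i x, ν x)
    (A J : Finset ι) :
    ∑ x with ∀ i ∈ J, (P i x ↔ i ∈ A), μ x = ∑ x with ∀ i ∈ J, (P i x ↔ i ∈ A), ν x := by
  suffices key : ∀ B : Finset ι,
      ∑ x with (∀ i ∈ B, P i x) ∧ ∀ i ∈ J, (P i x ↔ i ∈ A), μ x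
        = ∑ x with (∀ i ∈ B, P i x) ∧ ∀ i ∈ J, (P i x ↔ i ∈ A), ν x by
    simpa using key ∅
  induction J using Finset.induction_on with
  | empty => simpa using h
  | insert j J hj ih =>
    intro B
    set R : α → Prop := fun x => ∀ i ∈ J, (P i x ↔ i ∈ A)
    by_cases hjA : j ∈ A
    · have hins : ∀ m : α → ℝ,
          ∑ x with (∀ i ∈ B, P i x) ∧ ∀ i ∈ insert j J, (P i x ↔ i ∈ A), m x
            = ∑ x with (∀ i ∈ insert j B, P i x) ∧ R x, m x := fun m =>
        sum_congr (filter_congr fun x _ => by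
          simp only [forall_mem_insert, hjA, iff_true, R]; tauto) fun _ _ => rfl
      rw [hins, hins, ih]
    · have hdiff : ∀ m : α → ℝ,
          ∑ x with (∀ i ∈ B, P i x) ∧ ∀ i ∈ insert j J, (P i x ↔ i ∈ A), m x
            = ∑ x with (∀ i ∈ B, P i x) ∧ R x, m x
              - ∑ x with (∀ i ∈ insert j B, P i x) ∧ R x, m x := fun m => by
        rw [eq_sub_iff_add_eq, ← sum_filter_add_sum_filter_not
          (univ.filter fun x => (∀ i ∈ B, P i x) ∧ R x) (fun x => P j x),
          filter_filter, filter_filter, add_comm]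
        congr 1 <;> refine sum_congr (filter_congr fun x _ => ?_) fun _ _ => rfl
          <;> simp only [forall_mem_insert, hjA, iff_false, R] <;> tauto
      rw [hdiff, hdiff, ih, ih]

end Mass

theorem sum_filter_sat_eq_of_agree {t : SignedEdge V} (ht : t.edge.Nonempty)
    {μ ν : (V → Bool) → ℝ} (htot : ∑ x, μ x = ∑ x, ν x)
    (hnode : ∀ u ∈ t.edge, ∑ x with x u = true, μ x = ∑ x with x u = true, ν x)
    (hedge : 2 ≤ t.edge.card → ∑ x with t.Sat x, μ x = ∑ x with t.Sat x, ν x) :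
    ∑ x with t.Sat x, μ x = ∑ x with t.Sat x, ν x := by
  rcases le_or_gt 2 t.edge.card with h2 | h1
  · exact hedge h2
  obtain ⟨u, hu⟩ := (card_eq_one (s := t.edge)).1 (by have := ht.card_pos; omega)
  have hsat : ∀ x, t.Sat x ↔ x u = t.sign u := by simp [SignedEdge.Sat, hu]
  simp only [hsat]
  exact sum_filter_eq_of_sum_filter_true_eq htot (fun x => x u)
    (hnode u (hu ▸ mem_singleton_self u)) _

section Pattern

variable {V ι : Type*} [Fintype ι]

def satSet (t : ι → SignedEdge V) (x : V → Bool) : Finset ι :=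
  univ.filter fun i => (t i).Sat x

variable {t : ι → SignedEdge V}

theorem sum_filter_satSet_eq [Fintype V] [DecidableEq V] [LinearOrder ι]
    (ht : Monotone fun i => (t i).edge) {μ ν : (V → Bool) → ℝ} (htot : ∑ x, μ x = ∑ x, ν x)
    (h : ∀ i, ∑ x with (t i).Sat x, μ x = ∑ x with (t i).Sat x, ν x) (A : Finset ι) :
    ∑ x with satSet t x = A, μ x = ∑ x with satSet t x = A, ν x := by
  have hatom : ∀ m : (V → Bool) → ℝ, ∑ x with satSet t x = A, m x
      = ∑ x with ∀ i ∈ univ, ((t i).Sat x ↔ i ∈ A), m x := fun m =>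
    sum_congr (filter_congr fun x _ => by simp [satSet, Finset.ext_iff]) fun _ _ => rfl
  rw [hatom, hatom]
  -- `convert` only reconciles the decidability instances of the two filters.
  convert sum_filter_forall_iff_eq (μ := μ) (ν := ν) (fun i => (t i).Sat) (fun B => ?_) A univ
    using 3
  rcases B.eq_empty_or_nonempty with rfl | hB
  · simpa using htot
  rcases sat_chain_forall_or ht B hB with hmax | hempty
  · simpa only [hmax] using h _
  · simp [hempty]

theorem sat_update_iff_of_satSet_eq [DecidableEq V] {v : V} {i : ι} (hv : v ∈ (t i).edge)
    {x y : V → Bool}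
    (hxy : satSet (fun j => (t j).eraseNode v) x = satSet (fun j => (t j).eraseNode v) y) :
    (t i).Sat (Function.update y v (x v)) ↔ (t i).Sat x := by
  have hi : ((t i).eraseNode v).Sat x ↔ ((t i).eraseNode v).Sat y := by
    simpa [satSet] using congrArg (i ∈ ·) hxy
  rw [SignedEdge.sat_iff_of_mem hv, SignedEdge.sat_iff_of_mem hv,
    SignedEdge.sat_eraseNode_update, Function.update_self, hi]

end Pattern

section PseudoBoolean

variable {V : Type*} {W : Finset V} {S : Finset (SignedEdge V)}

noncomputable def pbsPoint (W : Finset V) (S : Finset (SignedEdge V)) (x : V → Bool) :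
    (↥W → ℝ) × (↥S → ℝ) :=
  (fun u => if x u then 1 else 0, fun t => if (t : SignedEdge V).Sat x then 1 else 0)

theorem literal_eq_ite (σ b : Bool) :
    (if σ then (if b then 1 else 0) else 1 - (if b then 1 else 0) : ℝ)
      = if b = σ then 1 else 0 := by
  cases σ <;> cases b <;> norm_num

theorem prod_literal_eq_ite [DecidableEq V] {t : SignedEdge V} (ht : t.edge ⊆ W)
    (x : V → Bool) :
    ∏ u ∈ W.attach.filter (fun u => ↑u ∈ t.edge),
      (if t.sign u then (if x u then 1 else 0) else 1 - (if x u then 1 else 0) : ℝ)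
      = if t.Sat x then 1 else 0 := by
  simp only [literal_eq_ite]
  rw [prod_filter, prod_attach W fun u => if u ∈ t.edge then
    (if x u = t.sign u then (1 : ℝ) else 0) else 1, ← prod_filter,
    filter_mem_eq_inter, inter_eq_right.2 ht, prod_boole]
  rfl

theorem PBS_eq_range [DecidableEq V] (hS : ∀ t ∈ S, t.edge ⊆ W) :
    PBS W S = Set.range (pbsPoint W S) := by
  ext p
  constructor
  · rintro ⟨hnode, hedge⟩
    set x : V → Bool := fun u => if hu : u ∈ W then p.1 ⟨u, hu⟩ = 1 else false
    have hfst : ∀ u : ↥W, (if x u then 1 else 0 : ℝ) = p.1 u := fun u => by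
      rcases hnode u with h | h <;> simp [x, h]
    refine ⟨x, Prod.ext (funext hfst) (funext fun t => ?_)⟩
    rw [hedge, ← funext hfst]
    exact (prod_literal_eq_ite (hS t t.2) x).symm
  · rintro ⟨x, rfl⟩
    exact ⟨fun u => by by_cases h : x u <;> simp [pbsPoint, h],
      fun t => (prod_literal_eq_ite (hS t t.2) x).symm⟩

variable {ι : Type*} [Fintype ι] {w : ι → ℝ} {X : ι → V → Bool}

theorem sum_smul_pbsPoint_fst (u : ↥W) :
    (∑ i, w i • pbsPoint W S (X i)).1 u = ∑ i with X i u = true, w i := by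
  simp [pbsPoint, Prod.fst_sum, Finset.sum_apply, sum_filter]

theorem sum_smul_pbsPoint_snd (t : ↥S) :
    (∑ i, w i • pbsPoint W S (X i)).2 t = ∑ i with (t : SignedEdge V).Sat (X i), w i := by
  simp [pbsPoint, Prod.snd_sum, Finset.sum_apply, sum_filter]

theorem sum_smul_pbsPoint_mem_convexHull [DecidableEq V] (hS : ∀ t ∈ S, t.edge ⊆ W)
    (hw₀ : 0 ≤ w) (hw₁ : ∑ i, w i = 1) :
    ∑ i, w i • pbsPoint W S (X i) ∈ convexHull ℝ (PBS W S) :=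
  mem_convexHull_of_exists_fintype w _ hw₀ hw₁ (fun i => PBS_eq_range hS ▸ ⟨X i, rfl⟩) rfl

end PseudoBoolean

theorem exists_law_of_mem_convexHull_PBS {W : Finset V} {S : Finset (SignedEdge V)}
    (hS : ∀ t ∈ S, t.edge ⊆ W) {a : (↥W → ℝ) × (↥S → ℝ)} (ha : a ∈ convexHull ℝ (PBS W S)) :
    ∃ μ : (V → Bool) → ℝ, 0 ≤ μ ∧ ∑ x, μ x = 1 ∧ a = ∑ x, μ x • pbsPoint W S x := by
  rw [PBS_eq_range hS] at ha
  obtain ⟨ι, _, w, z, hw₀, hw₁, hz, rfl⟩ := mem_convexHull_iff_exists_fintype.1 ha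
  choose X hX using hz
  refine ⟨fun x => ∑ i with X i = x, w i, fun x => sum_nonneg fun i _ => hw₀ i,
    by rw [sum_fiberwise, hw₁], ?_⟩
  simp only [← hX, sum_smul]
  rw [← sum_fiberwise univ X]
  exact sum_congr rfl fun x _ => sum_congr rfl fun i hi => by rw [(mem_filter.1 hi).2]

section Coupling

variable {α β O : Type*} [Fintype α] [DecidableEq O] {μ : α → ℝ} {ν : β → ℝ} {f : α → O}
  {g : β → O}

/-- The coupling of `μ` and `ν` that is conditionally independent given the common value of the
statistics `f` and `g`. -/
noncomputable def coupling (μ : α → ℝ) (ν : β → ℝ) (f : α → O) (g : β → O) (p : α × β) : ℝ :=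
  if f p.1 = g p.2 then μ p.1 * ν p.2 / ∑ x with f x = f p.1, μ x else 0

theorem coupling_nonneg (hμ : 0 ≤ μ) (hν : 0 ≤ ν) : 0 ≤ coupling μ ν f g := fun p => by
  unfold coupling
  split_ifs
  · exact div_nonneg (mul_nonneg (hμ _) (hν _)) (sum_nonneg fun x _ => hμ x)
  · exact le_rfl

variable [Fintype β]

theorem sum_coupling_left (hμ : 0 ≤ μ)
    (hfg : ∀ o, ∑ x with f x = o, μ x = ∑ y with g y = o, ν y) (x : α) :
    ∑ y, coupling μ ν f g (x, y) = μ x := by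
  have hfiber : ∑ y with f x = g y, ν y = ∑ x' with f x' = f x, μ x' := by
    rw [hfg]
    exact sum_congr (filter_congr fun _ _ => eq_comm) fun _ _ => rfl
  simp only [coupling]
  rw [← sum_filter, ← sum_div, ← mul_sum, hfiber]
  refine mul_div_cancel_of_imp fun h => le_antisymm ?_ (hμ x)
  exact h ▸ single_le_sum (fun x' _ => hμ x') (mem_filter.2 ⟨mem_univ x, rfl⟩)

theorem sum_coupling_right (hν : 0 ≤ ν)
    (hfg : ∀ o, ∑ x with f x = o, μ x = ∑ y with g y = o, ν y) (y : β) :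
    ∑ x, coupling μ ν f g (x, y) = ν y := by
  simp only [coupling]
  rw [← sum_filter, sum_congr rfl fun x hx => by rw [(mem_filter.1 hx).2, mul_div_assoc],
    ← sum_mul]
  refine mul_div_cancel_of_imp' fun h => le_antisymm ?_ (hν y)
  rw [hfg] at h
  exact h ▸ single_le_sum (fun y' _ => hν y') (mem_filter.2 ⟨mem_univ y, rfl⟩)

theorem sum_coupling (hν : 0 ≤ ν) (hfg : ∀ o, ∑ x with f x = o, μ x = ∑ y with g y = o, ν y) :
    ∑ p, coupling μ ν f g p = ∑ y, ν y := by
  rw [Fintype.sum_prod_type_right]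
  exact sum_congr rfl fun y _ => sum_coupling_right hν hfg y

theorem sum_filter_coupling_fst (hμ : 0 ≤ μ)
    (hfg : ∀ o, ∑ x with f x = o, μ x = ∑ y with g y = o, ν y) (P : α → Prop)
    [DecidablePred P] : ∑ p with P p.1, coupling μ ν f g p = ∑ x with P x, μ x := by
  rw [sum_filter, sum_filter, Fintype.sum_prod_type]
  refine sum_congr rfl fun x _ => ?_
  split_ifs
  · exact sum_coupling_left hμ hfg x
  · exact sum_const_zero

theorem sum_filter_coupling_snd (hν : 0 ≤ ν)
    (hfg : ∀ o, ∑ x with f x = o, μ x = ∑ y with g y = o, ν y) (P : β → Prop)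
    [DecidablePred P] : ∑ p with P p.2, coupling μ ν f g p = ∑ y with P y, ν y := by
  rw [sum_filter, sum_filter, Fintype.sum_prod_type_right]
  refine sum_congr rfl fun y _ => ?_
  split_ifs
  · exact sum_coupling_right hν hfg y
  · exact sum_const_zero

theorem sum_filter_coupling_congr {Q Q' : α × β → Prop} [DecidablePred Q] [DecidablePred Q']
    (h : ∀ p, f p.1 = g p.2 → (Q p ↔ Q' p)) :
    ∑ p with Q p, coupling μ ν f g p = ∑ p with Q' p, coupling μ ν f g p := by
  rw [sum_filter, sum_filter]
  refine sum_congr rfl fun p _ => ?_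
  by_cases hp : f p.1 = g p.2
  · simp only [h p hp]
  · simp [coupling, hp]

end Coupling

section Gluing

variable {O : Type*} [DecidableEq O] {T : (V → Bool) → O} {μ ν : (V → Bool) → ℝ} {v : V}

theorem sum_filter_coupling_update_apply_of_ne (hν : 0 ≤ ν)
    (hT : ∀ o, ∑ x with T x = o, μ x = ∑ x with T x = o, ν x) {u : V} (huv : u ≠ v) :
    ∑ p with Function.update p.2 v (p.1 v) u = true, coupling μ ν T T p
      = ∑ y with y u = true, ν y := by
  simpa only [Function.update_of_ne huv] using sum_filter_coupling_snd hν hT (· u = true)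

theorem sum_filter_coupling_update_apply_self (hμ : 0 ≤ μ)
    (hT : ∀ o, ∑ x with T x = o, μ x = ∑ x with T x = o, ν x) :
    ∑ p with Function.update p.2 v (p.1 v) v = true, coupling μ ν T T p
      = ∑ x with x v = true, μ x := by
  simpa only [Function.update_self] using sum_filter_coupling_fst hμ hT (· v = true)

theorem sum_filter_coupling_sat_update_of_notMem (hν : 0 ≤ ν)
    (hT : ∀ o, ∑ x with T x = o, μ x = ∑ x with T x = o, ν x) {t : SignedEdge V}
    (hvt : v ∉ t.edge) :
    ∑ p with t.Sat (Function.update p.2 v (p.1 v)), coupling μ ν T T p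
      = ∑ y with t.Sat y, ν y := by
  simpa only [SignedEdge.sat_update_of_notMem hvt] using sum_filter_coupling_snd hν hT t.Sat

theorem sum_filter_coupling_sat_update_of_mem {ι : Type*} [Fintype ι] [DecidableEq ι]
    {t : ι → SignedEdge V} (hμ : 0 ≤ μ)
    (hT : ∀ A, ∑ x with satSet (fun j => (t j).eraseNode v) x = A, μ x
      = ∑ x with satSet (fun j => (t j).eraseNode v) x = A, ν x)
    {i : ι} (hv : v ∈ (t i).edge) :
    ∑ p with (t i).Sat (Function.update p.2 v (p.1 v)),
        coupling μ ν (satSet fun j => (t j).eraseNode v) (satSet fun j => (t j).eraseNode v) p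
      = ∑ x with (t i).Sat x, μ x :=
  (sum_filter_coupling_congr fun _ hp => sat_update_iff_of_satSet_eq hv hp).trans
    (sum_filter_coupling_fst hμ hT (t i).Sat)

end Gluing

section BetaLeaf

variable {S : Finset (SignedEdge V)} {v : V} {k : ℕ} {s : Fin (k + 1) → SignedEdge V}

theorem edge_subset_of_mem_edgesAt_union_erasedAt
    (hchain : ∀ i j : Fin (k + 1), i ≤ j → (s i).edge ⊆ (s j).edge) :
    ∀ t ∈ edgesAt k s ∪ erasedAt k s v, t.edge ⊆ (s (Fin.last k)).edge := by
  intro t ht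
  rcases mem_union.1 ht with ht | ht
  · obtain ⟨i, -, rfl⟩ := mem_image.1 ht
    exact hchain i _ (Fin.le_last i)
  · obtain ⟨i, -, rfl⟩ := mem_image.1 (mem_filter.1 ht).1
    exact (erase_subset v _).trans (hchain i _ (Fin.le_last i))

theorem notMem_of_mem_removedEdges {t : SignedEdge V} (ht : t ∈ removedEdges S v) :
    v ∉ t.edge := by
  obtain ⟨t', -, rfl⟩ := mem_image.1 (mem_filter.1 ht).1
  exact notMem_erase v t'.edge

theorem edge_subset_of_mem_removedEdges :
    ∀ t ∈ removedEdges S v, t.edge ⊆ univ.erase v := fun _ ht u hu =>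
  mem_erase.2 ⟨ne_of_mem_of_not_mem hu (notMem_of_mem_removedEdges ht), mem_univ u⟩

theorem eraseNode_mem_removedEdges {t : SignedEdge V} (ht : t ∈ S)
    (hcard : 1 ≤ (t.edge.erase v).card) : t.eraseNode v ∈ removedEdges S v :=
  mem_filter.2 ⟨mem_image_of_mem _ ht, hcard⟩

theorem mem_removedEdges_of_mem_erasedAt (hmem : ∀ i, s i ∈ S) {t : SignedEdge V}
    (ht : t ∈ erasedAt k s v) : t ∈ removedEdges S v := by
  obtain ⟨hti, hcard⟩ := mem_filter.1 ht
  obtain ⟨i, -, rfl⟩ := mem_image.1 hti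
  exact eraseNode_mem_removedEdges (hmem i) (one_le_two.trans hcard)

theorem sum_filter_sat_eraseNode_eq (hcard : ∀ t ∈ S, 2 ≤ t.edge.card) (hmem : ∀ i, s i ∈ S)
    (hv : ∀ i, v ∈ (s i).edge) (hchain : ∀ i j : Fin (k + 1), i ≤ j → (s i).edge ⊆ (s j).edge)
    {μ ν : (V → Bool) → ℝ} (htot : ∑ x, μ x = ∑ x, ν x)
    (hnode : ∀ u, u ∈ (s (Fin.last k)).edge → u ∈ univ.erase v →
      ∑ x with x u = true, μ x = ∑ x with x u = true, ν x)
    (hedge : ∀ t, t ∈ edgesAt k s ∪ erasedAt k s v → t ∈ removedEdges S v →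
      ∑ x with t.Sat x, μ x = ∑ x with t.Sat x, ν x) (i : Fin (k + 1)) :
    ∑ x with ((s i).eraseNode v).Sat x, μ x = ∑ x with ((s i).eraseNode v).Sat x, ν x := by
  have hcard' : 1 ≤ ((s i).edge.erase v).card := by
    have := hcard _ (hmem i)
    rw [card_erase_of_mem (hv i)]
    omega
  refine sum_filter_sat_eq_of_agree (t := (s i).eraseNode v) (card_pos.1 hcard') htot
    (fun u hu => ?_) fun h2 => ?_
  · exact hnode u (hchain i _ (Fin.le_last i) (mem_of_mem_erase hu))
      (mem_erase.2 ⟨ne_of_mem_erase hu, mem_univ u⟩)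
  · exact hedge _ (mem_union_right _ (mem_filter.2 ⟨mem_image_of_mem _ (mem_univ i), h2⟩))
      (eraseNode_mem_removedEdges (hmem i) hcard')

end BetaLeaf

theorem stmt_9_general (S : Finset (SignedEdge V)) (hcard : ∀ t ∈ S, 2 ≤ t.edge.card)
    (v : V) (k : ℕ) (s : Fin (k + 1) → SignedEdge V)
    (hmem : ∀ i, s i ∈ S) (hv : ∀ i, v ∈ (s i).edge)
    (hchain : ∀ i j : Fin (k + 1), i ≤ j → (s i).edge ⊆ (s j).edge)
    (a : (↥((s (Fin.last k)).edge) → ℝ) × (↥(edgesAt k s ∪ erasedAt k s v) → ℝ))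
    (ha : a ∈ convexHull ℝ (PBS ((s (Fin.last k)).edge) (edgesAt k s ∪ erasedAt k s v)))
    (b : (↥(Finset.univ.erase v) → ℝ) × (↥(removedEdges S v) → ℝ))
    (hb : b ∈ convexHull ℝ (PBS (Finset.univ.erase v) (removedEdges S v)))
    (hshareNodes : ∀ u, ∀ h1 : u ∈ (s (Fin.last k)).edge, ∀ h2 : u ∈ Finset.univ.erase v,
      a.1 ⟨u, h1⟩ = b.1 ⟨u, h2⟩)
    (hshareEdges : ∀ t, ∀ h1 : t ∈ edgesAt k s ∪ erasedAt k s v,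
      ∀ h2 : t ∈ removedEdges S v, a.2 ⟨t, h1⟩ = b.2 ⟨t, h2⟩) :
    ∃ c ∈ convexHull ℝ (PBS (Finset.univ : Finset V) S),
      (∀ u, ∀ h1 : u ∈ (s (Fin.last k)).edge,
        c.1 ⟨u, Finset.mem_univ u⟩ = a.1 ⟨u, h1⟩) ∧
      (∀ u, ∀ h2 : u ∈ Finset.univ.erase v,
        c.1 ⟨u, Finset.mem_univ u⟩ = b.1 ⟨u, h2⟩) ∧
      (∀ t, ∀ ht : t ∈ S, ∀ h1 : t ∈ edgesAt k s ∪ erasedAt k s v,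
        c.2 ⟨t, ht⟩ = a.2 ⟨t, h1⟩) ∧
      (∀ t, ∀ ht : t ∈ S, ∀ h2 : t ∈ removedEdges S v,
        c.2 ⟨t, ht⟩ = b.2 ⟨t, h2⟩) := by
  obtain ⟨μ, hμ₀, hμ₁, rfl⟩ :=
    exists_law_of_mem_convexHull_PBS (edge_subset_of_mem_edgesAt_union_erasedAt hchain) ha
  obtain ⟨ν, hν₀, hν₁, rfl⟩ := exists_law_of_mem_convexHull_PBS edge_subset_of_mem_removedEdges hb
  simp only [sum_smul_pbsPoint_fst, sum_smul_pbsPoint_snd] at hshareNodes hshareEdges ⊢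
  have hT := sum_filter_satSet_eq (fun i j hij => erase_subset_erase v (hchain i j hij))
    (hμ₁.trans hν₁.symm)
    (sum_filter_sat_eraseNode_eq hcard hmem hv hchain (hμ₁.trans hν₁.symm) hshareNodes hshareEdges)
  refine ⟨∑ p, coupling μ ν _ _ p • pbsPoint univ S (Function.update p.2 v (p.1 v)),
    sum_smul_pbsPoint_mem_convexHull (fun t _ => subset_univ _) (coupling_nonneg hμ₀ hν₀)
      ((sum_coupling hν₀ hT).trans hν₁), fun u h1 => ?_, fun u h2 => ?_, fun t ht h1 => ?_,
    fun t ht h2 => ?_⟩ <;> simp only [sum_smul_pbsPoint_fst, sum_smul_pbsPoint_snd]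
  · rcases eq_or_ne u v with rfl | huv
    · exact sum_filter_coupling_update_apply_self hμ₀ hT
    · rw [sum_filter_coupling_update_apply_of_ne hν₀ hT huv]
      exact (hshareNodes u h1 (mem_erase.2 ⟨huv, mem_univ u⟩)).symm
  · exact sum_filter_coupling_update_apply_of_ne hν₀ hT (ne_of_mem_erase h2)
  · rcases mem_union.1 h1 with hE | hP
    · obtain ⟨i, -, rfl⟩ := mem_image.1 hE
      exact sum_filter_coupling_sat_update_of_mem hμ₀ hT (hv i)
    · have h2 := mem_removedEdges_of_mem_erasedAt hmem hP
      rw [sum_filter_coupling_sat_update_of_notMem hν₀ hT (notMem_of_mem_removedEdges h2)]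
      exact (hshareEdges t h1 h2).symm
  · exact sum_filter_coupling_sat_update_of_notMem hν₀ hT (notMem_of_mem_removedEdges h2)

/-- (Decomposition theorem.) Let `H = (V, S)` be a signed hypergraph with a
β-leaf `v` whose signed edges containing `v` are `s₁ ⊆ ⋯ ⊆ s_k`, and with `sᵢ - v ∈ S`
whenever `|sᵢ - v| ≥ 2`. Let `H₁ = (V₁, S_v ∪ P_v)` (with `V₁` the underlying edge of `s_k`)
and `H₂ = H - v`. Whenever a point of `PBP(H₁)` and a point of `PBP(H₂)` agree on all shared
coordinates, the combined vector lies in `PBP(H)`; i.e., `PBP(H)` is decomposable into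
`PBP(H₁)` and `PBP(H₂)`. -/
theorem stmt_9 (S : Finset (SignedEdge V)) (hcard : ∀ t ∈ S, 2 ≤ t.edge.card)
    (v : V) (k : ℕ) (s : Fin (k + 1) → SignedEdge V)
    (hmem : ∀ i, s i ∈ S) (hv : ∀ i, v ∈ (s i).edge)
    (hchain : ∀ i j : Fin (k + 1), i ≤ j → (s i).edge ⊆ (s j).edge)
    (hexact : ∀ t ∈ S, v ∈ t.edge → ∃ i, t = s i)
    (hclosed : ∀ i, 2 ≤ ((s i).edge.erase v).card → (s i).eraseNode v ∈ S)
    (a : (↥((s (Fin.last k)).edge) → ℝ) × (↥(edgesAt k s ∪ erasedAt k s v) → ℝ))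
    (ha : a ∈ convexHull ℝ (PBS ((s (Fin.last k)).edge) (edgesAt k s ∪ erasedAt k s v)))
    (b : (↥(Finset.univ.erase v) → ℝ) × (↥(removedEdges S v) → ℝ))
    (hb : b ∈ convexHull ℝ (PBS (Finset.univ.erase v) (removedEdges S v)))
    (hshareNodes : ∀ u, ∀ h1 : u ∈ (s (Fin.last k)).edge, ∀ h2 : u ∈ Finset.univ.erase v,
      a.1 ⟨u, h1⟩ = b.1 ⟨u, h2⟩)
    (hshareEdges : ∀ t, ∀ h1 : t ∈ edgesAt k s ∪ erasedAt k s v,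
      ∀ h2 : t ∈ removedEdges S v, a.2 ⟨t, h1⟩ = b.2 ⟨t, h2⟩) :
    ∃ c ∈ convexHull ℝ (PBS (Finset.univ : Finset V) S),
      (∀ u, ∀ h1 : u ∈ (s (Fin.last k)).edge,
        c.1 ⟨u, Finset.mem_univ u⟩ = a.1 ⟨u, h1⟩) ∧
      (∀ u, ∀ h2 : u ∈ Finset.univ.erase v,
        c.1 ⟨u, Finset.mem_univ u⟩ = b.1 ⟨u, h2⟩) ∧
      (∀ t, ∀ ht : t ∈ S, ∀ h1 : t ∈ edgesAt k s ∪ erasedAt k s v,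
        c.2 ⟨t, ht⟩ = a.2 ⟨t, h1⟩) ∧
      (∀ t, ∀ ht : t ∈ S, ∀ h2 : t ∈ removedEdges S v,
        c.2 ⟨t, ht⟩ = b.2 ⟨t, h2⟩) :=
  stmt_9_general S hcard v k s hmem hv hchain a ha b hb hshareNodes hshareEdges
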